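/- arXiv:1904.12002 — 2 statements merged into one kernel-verified Lean document; each statement's English description precedes it below -/
import Mathlib

section
/- Let u be a unit vector in ℝ^n, let p ∈ ℝ^n with 0 < ‖p‖ ≤ q satisfy ⟨p/‖p‖, u⟩ = −1 + ε for some ε ∈ [ε_min, ε_max] ⊂ (0, 1), and let λ ∈ (0, 2]. Define d = p − ⟨p, u⟩·u, λ^SC = ‖p‖²/‖d‖², and M = q/√(2·ε_min − ε_min²). Then ‖λ^SC·d − λ·p‖² < M² + 4·q². -/
/-!
Writing `c = ⟪p, u⟫`, the vector `d = p - c • u` is orthogonal to `u`, so `⟪d, p⟫ = ‖d‖² = ‖p‖² - c²`.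
Expanding the square then gives `‖λ^SC • d - λ • p‖² = ‖p‖⁴ / ‖d‖² - (2λ - λ²) ‖p‖²`. The angle
condition says `c = ‖p‖ (ε - 1)`, so `‖d‖² = ‖p‖² (2ε - ε²)`, and the first term is
`‖p‖² / (2ε - ε²) ≤ q² / (2εmin - εmin²) = M²` because `t ↦ 2t - t²` increases on `[0, 1]`;
the second term is nonpositive for `λ ∈ [0, 2]`, and `4q² > 0` makes the bound strict.
-/

open scoped RealInnerProductSpace

section InnerProductSpace

variable {E : Type*} [NormedAddCommGroup E] [InnerProductSpace ℝ E]

theorem norm_sub_inner_smul_sq_of_norm_eq_one {u : E} (hu : ‖u‖ = 1) (p : E) :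
    ‖p - ⟪p, u⟫ • u‖ ^ 2 = ‖p‖ ^ 2 - ⟪p, u⟫ ^ 2 := by
  rw [norm_sub_sq_real, real_inner_smul_right, norm_smul, hu, Real.norm_eq_abs, mul_one, sq_abs]
  ring

theorem inner_sub_inner_smul_self_of_norm_eq_one {u : E} (hu : ‖u‖ = 1) (p : E) :
    ⟪p - ⟪p, u⟫ • u, p⟫ = ‖p - ⟪p, u⟫ • u‖ ^ 2 := by
  rw [norm_sub_inner_smul_sq_of_norm_eq_one hu, inner_sub_left, real_inner_smul_left,
    real_inner_comm u p, real_inner_self_eq_norm_sq]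
  ring

theorem norm_div_smul_sub_smul_sq {d p : E} (hdp : ⟪d, p⟫ = ‖d‖ ^ 2) (hd : ‖d‖ ≠ 0) (lam : ℝ) :
    ‖(‖p‖ ^ 2 / ‖d‖ ^ 2) • d - lam • p‖ ^ 2
      = ‖p‖ ^ 4 / ‖d‖ ^ 2 + (lam ^ 2 - 2 * lam) * ‖p‖ ^ 2 := by
  rw [norm_sub_sq_real, real_inner_smul_left, real_inner_smul_right, hdp, norm_smul, norm_smul,
    Real.norm_eq_abs, Real.norm_eq_abs, mul_pow, mul_pow, sq_abs, sq_abs]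
  field_simp
  ring

end InnerProductSpace

theorem two_mul_sub_sq_le_two_mul_sub_sq {a b : ℝ} (hab : a ≤ b) (hb : b ≤ 1) :
    2 * a - a ^ 2 ≤ 2 * b - b ^ 2 := by
  nlinarith

/-- For a unit vector `u` and `p` with `0 < ‖p‖ ≤ q`,
`⟪p/‖p‖, u⟫ = -1 + ε`, `ε ∈ [εmin, εmax] ⊂ (0,1)` and `λ ∈ (0,2]`, the outer
surrogate constraint perturbation vector satisfies
`‖λ^SC • d - λ • p‖² < M² + 4 q²` where `d = p - ⟪p, u⟫ • u`,
`λ^SC = ‖p‖²/‖d‖²` and `M = q/√(2 εmin - εmin²)`. -/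
theorem surrogate_constraint_outer_perturbation_bounded {n : ℕ}
    (u : EuclideanSpace ℝ (Fin n)) (hu : ‖u‖ = 1)
    (p : EuclideanSpace ℝ (Fin n)) (q : ℝ)
    (hp0 : 0 < ‖p‖) (hpq : ‖p‖ ≤ q)
    (ε εmin εmax : ℝ)
    (hmin : 0 < εmin) (hε1 : εmin ≤ ε) (hε2 : ε ≤ εmax) (hmax : εmax < 1)
    (hangle : ⟪‖p‖⁻¹ • p, u⟫ = -1 + ε)
    (lam : ℝ) (hlam0 : 0 < lam) (hlam2 : lam ≤ 2)
    (d : EuclideanSpace ℝ (Fin n)) (hd : d = p - ⟪p, u⟫ • u)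
    (lamSC : ℝ) (hlamSC : lamSC = ‖p‖ ^ 2 / ‖d‖ ^ 2)
    (M : ℝ) (hM : M = q / Real.sqrt (2 * εmin - εmin ^ 2)) :
    ‖lamSC • d - lam • p‖ ^ 2 < M ^ 2 + 4 * q ^ 2 := by
  have hpu : ⟪p, u⟫ = ‖p‖ * (ε - 1) := by
    rw [real_inner_smul_left, inv_mul_eq_iff_eq_mul₀ hp0.ne'] at hangle
    linarith
  have hε : 2 * εmin - εmin ^ 2 ≤ 2 * ε - ε ^ 2 :=
    two_mul_sub_sq_le_two_mul_sub_sq hε1 (by linarith)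
  have hεmin : 0 < 2 * εmin - εmin ^ 2 := by nlinarith
  have hd2 : ‖d‖ ^ 2 = ‖p‖ ^ 2 * (2 * ε - ε ^ 2) := by
    rw [hd, norm_sub_inner_smul_sq_of_norm_eq_one hu, hpu]
    ring
  have hd0 : ‖d‖ ≠ 0 :=
    (pow_ne_zero_iff two_ne_zero).mp (hd2 ▸ (mul_pos (pow_pos hp0 2) (hεmin.trans_le hε)).ne')
  have hperturb : ‖lamSC • d - lam • p‖ ^ 2
      = ‖p‖ ^ 2 / (2 * ε - ε ^ 2) + (lam ^ 2 - 2 * lam) * ‖p‖ ^ 2 := by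
    rw [hlamSC, norm_div_smul_sub_smul_sq
      (hd ▸ inner_sub_inner_smul_self_of_norm_eq_one hu p) hd0, hd2]
    field_simp
  have hSC : ‖p‖ ^ 2 / (2 * ε - ε ^ 2) ≤ M ^ 2 := by
    rw [hM, div_pow, Real.sq_sqrt hεmin.le]
    gcongr
  have hlam : (lam ^ 2 - 2 * lam) * ‖p‖ ^ 2 ≤ 0 :=
    mul_nonpos_of_nonpos_of_nonneg (by nlinarith) (sq_nonneg _)
  have hq : 0 < q := hp0.trans_le hpq
  linarith [pow_pos hq 2]
end

section
/- Let u and v be unit vectors in ℝ^n with ⟨u, v⟩ = −1 + ε for some ε ∈ (0, 1), and let d = u − ⟨u, v⟩·v. Let x ∈ ℝ^n and r > 0, and define A = x + r·d/‖d‖ and h = x + r·√(1 − ε/2)·(u + v)/‖u + v‖. Then ‖h − A‖ = r·√(ε/2). -/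
open scoped RealInnerProductSpace

/-!
Put `c = ⟪u, v⟫`, `w = u + v` and `d = u - c • v`. Since `d ⟂ v`, `⟪w, d⟫ = ‖d‖²`, so the unit
vectors `ŵ = w / ‖w‖` and `d̂ = d / ‖d‖` satisfy `s := ⟪ŵ, d̂⟫ = ‖d‖ / ‖w‖`; from `‖w‖² = 2 (1 + c)`
and `‖d‖² = 1 - c²` one gets `s = √((1 - c) / 2) = √(1 - ε / 2)`. Hence `h - A = r • (s • ŵ - d̂)`,
and `s • ŵ - d̂` is minus the component of `d̂` orthogonal to `ŵ`, of squared length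
`1 - s² = ε / 2`.
-/

section
variable {E : Type*} [NormedAddCommGroup E] [InnerProductSpace ℝ E]

theorem norm_inner_smul_sub_sq {a : E} (ha : ‖a‖ = 1) (b : E) :
    ‖⟪a, b⟫ • a - b‖ ^ 2 = ‖b‖ ^ 2 - ⟪a, b⟫ ^ 2 := by
  rw [norm_sub_sq_real, norm_smul, real_inner_smul_left, ha, Real.norm_eq_abs, mul_pow, sq_abs]
  ring

theorem norm_inner_smul_sub_of_norm_eq_one {a b : E} (ha : ‖a‖ = 1) (hb : ‖b‖ = 1) :
    ‖⟪a, b⟫ • a - b‖ = √(1 - ⟪a, b⟫ ^ 2) := by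
  rw [← Real.sqrt_sq (norm_nonneg _), norm_inner_smul_sub_sq ha, hb, one_pow]

theorem norm_sub_inner_smul_sq {v : E} (hv : ‖v‖ = 1) (u : E) :
    ‖u - ⟪u, v⟫ • v‖ ^ 2 = ‖u‖ ^ 2 - ⟪u, v⟫ ^ 2 := by
  rw [← norm_neg, neg_sub, real_inner_comm, norm_inner_smul_sub_sq hv]

theorem inner_sub_inner_smul_eq_zero {v : E} (hv : ‖v‖ = 1) (u : E) :
    ⟪v, u - ⟪u, v⟫ • v⟫ = 0 := by
  rw [inner_sub_right, real_inner_smul_right, real_inner_self_eq_norm_sq, hv, real_inner_comm]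
  ring

theorem inner_add_sub_inner_smul {v : E} (hv : ‖v‖ = 1) (u : E) :
    ⟪u + v, u - ⟪u, v⟫ • v⟫ = ‖u - ⟪u, v⟫ • v‖ ^ 2 := by
  have hu : u + v = (u - ⟪u, v⟫ • v) + (⟪u, v⟫ + 1) • v := by
    rw [add_smul, one_smul]; abel
  rw [hu, inner_add_left, real_inner_smul_left, inner_sub_inner_smul_eq_zero hv,
    real_inner_self_eq_norm_sq]
  ring

theorem inner_normalize_add_normalize_sub_inner_smul {u v : E} (hu : ‖u‖ = 1) (hv : ‖v‖ = 1)
    (huv : ⟪u, v⟫ ≠ -1) :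
    ⟪‖u + v‖⁻¹ • (u + v), ‖u - ⟪u, v⟫ • v‖⁻¹ • (u - ⟪u, v⟫ • v)⟫ = √((1 - ⟪u, v⟫) / 2) := by
  have hw : ‖u + v‖ ^ 2 = 2 * (1 + ⟪u, v⟫) := by
    rw [norm_add_sq_real, hu, hv]; ring
  have hd : ‖u - ⟪u, v⟫ • v‖ ^ 2 = (1 + ⟪u, v⟫) * (1 - ⟪u, v⟫) := by
    rw [norm_sub_inner_smul_sq hv, hu]; ring
  have hc : 1 + ⟪u, v⟫ ≠ 0 := fun h ↦ huv (by linarith)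
  have hd_div : ‖u - ⟪u, v⟫ • v‖ ^ 2 / ‖u + v‖ ^ 2 = (1 - ⟪u, v⟫) / 2 := by
    rw [hw, hd]; field_simp
  rw [real_inner_smul_left, real_inner_smul_right, inner_add_sub_inner_smul hv, ← hd_div,
    Real.sqrt_div' _ (sq_nonneg _), Real.sqrt_sq (norm_nonneg _), Real.sqrt_sq (norm_nonneg _)]
  rcases eq_or_ne ‖u - ⟪u, v⟫ • v‖ 0 with h0 | h0
  · simp [h0]
  · field_simp

end

/-- For unit vectors `u`, `v` with `⟪u, v⟫ = -1 + ε`, `ε ∈ (0,1)`,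
`d = u - ⟪u, v⟫ • v`, a point `x` and radius `r > 0`, the triangle tip
`A = x + (r/‖d‖) • d` and the optimally-stepped heavy ball point
`h = x + (r √(1 - ε/2)/‖u + v‖) • (u + v)` satisfy `‖h - A‖ = r √(ε/2)`. -/
theorem heavy_ball_distance_to_triangle_tip {n : ℕ}
    (u v : EuclideanSpace ℝ (Fin n))
    (hu : ‖u‖ = 1) (hv : ‖v‖ = 1)
    (ε : ℝ) (hε0 : 0 < ε) (hε1 : ε < 1)
    (hangle : ⟪u, v⟫ = -1 + ε)
    (d : EuclideanSpace ℝ (Fin n)) (hd : d = u - ⟪u, v⟫ • v)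
    (x : EuclideanSpace ℝ (Fin n)) (r : ℝ) (hr : 0 < r)
    (A h : EuclideanSpace ℝ (Fin n))
    (hA : A = x + (r / ‖d‖) • d)
    (hh : h = x + (r * Real.sqrt (1 - ε / 2) / ‖u + v‖) • (u + v)) :
    ‖h - A‖ = r * Real.sqrt (ε / 2) := by
  have hw0 : u + v ≠ 0 := by
    intro h0
    have := norm_add_sq_real u v
    rw [h0, hu, hv, hangle] at this
    norm_num at this; linarith
  have hd0 : d ≠ 0 := by
    intro h0
    have := norm_sub_inner_smul_sq hv u
    rw [← hd, h0, hu, hangle] at this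
    norm_num at this; nlinarith
  have hs : ⟪‖u + v‖⁻¹ • (u + v), ‖d‖⁻¹ • d⟫ = √(1 - ε / 2) := by
    rw [hd, inner_normalize_add_normalize_sub_inner_smul hu hv (by linarith), hangle]
    congr 1
    ring
  have hhA : h - A =
      r • (⟪‖u + v‖⁻¹ • (u + v), ‖d‖⁻¹ • d⟫ • (‖u + v‖⁻¹ • (u + v)) - ‖d‖⁻¹ • d) := by
    rw [hh, hA, hs, smul_sub, smul_smul, smul_smul, smul_smul]
    simp only [div_eq_mul_inv]
    abel
  rw [hhA, norm_smul, Real.norm_of_nonneg hr.le,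
    norm_inner_smul_sub_of_norm_eq_one (by simpa using norm_smul_inv_norm (𝕜 := ℝ) hw0)
      (by simpa using norm_smul_inv_norm (𝕜 := ℝ) hd0), hs, Real.sq_sqrt (by linarith), sub_sub_cancel]
end
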